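/- Let $G=(V,E,w)$ be a weighted graph with edge weights summing to 1 and Laplacian $L$, and let $D_1, D_2, D_3$ be i.i.d. random vectors with $D_k=\delta_{\hat e_k}$ for i.i.d. random edges $\hat e_k$ drawn with probabilities $w(e)$, and $\hat L = \frac{1}{N}\sum_{k=1}^N D_kD_k^\top$. Then the following exact identities hold: $\mathbb{E}(D_1D_1^\top) = L$; $\mathbb{E}\big((D_1^\top D_2)^2\big) = \mathrm{tr}(L^2)$; $\mathbb{E}\big((D_1^\top D_2)^4\big) = \mathrm{tr}(L^2) + 12\sum_{1\le i<j\le n} L_{ij}^2$; $\mathbb{E}\big((D_1^\top D_2)^2(D_1^\top D_3)^2\big) = \sum_{1\le i<j\le n} |L_{ij}|\big(L_{ii}+L_{jj}+2|L_{ij}|\big)^2$; $\mathbb{E}\big(\|\hat L - L\|_F^2\big) = \frac{1}{N}\big(4 - \mathrm{tr}(L^2)\big)$; and $\mathbb{E}\big(\mathrm{tr}(\hat L^2)\big) = \frac{4}{N} + \frac{N-1}{N}\mathrm{tr}(L^2)$. -/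

import Mathlib

open MeasureTheory ProbabilityTheory Filter Finset

noncomputable section

namespace GS

/-- Signed incidence vector `δ_e = u_i - u_j` of an ordered pair `e = (i,j)`. -/
def edgeVec (n : ℕ) (p : Fin n × Fin n) : Fin n → ℝ :=
  fun k => (if k = p.1 then (1 : ℝ) else 0) - (if k = p.2 then (1 : ℝ) else 0)

/-- Rank-one edge matrix `Δ_e = δ_e δ_e^⊤`. -/
def edgeMat (n : ℕ) (p : Fin n × Fin n) : Matrix (Fin n) (Fin n) ℝ :=
  Matrix.vecMulVec (edgeVec n p) (edgeVec n p)

/-- The ordered pairs `(i,j)` with `i < j`, indexing the potential edges. -/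
def pairs (n : ℕ) : Finset (Fin n × Fin n) :=
  Finset.univ.filter (fun p => p.1 < p.2)

/-- Graph Laplacian `L = ∑_e w(e) Δ_e`. -/
def lap (n : ℕ) (w : Fin n → Fin n → ℝ) : Matrix (Fin n) (Fin n) ℝ :=
  ∑ p ∈ pairs n, w p.1 p.2 • edgeMat n p

/-- Sparsified Laplacian `(1/N) ∑_k Δ_{e_k}` built from `N` sampled edges. -/
def sparseLap (n N : ℕ) (q : Fin N → Fin n × Fin n) : Matrix (Fin n) (Fin n) ℝ :=
  (N : ℝ)⁻¹ • ∑ k : Fin N, edgeMat n (q k)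

/-- Quadratic form `x^⊤ A x`. -/
def quad {n : ℕ} (A : Matrix (Fin n) (Fin n) ℝ) (x : Fin n → ℝ) : ℝ :=
  ∑ i, ∑ j, x i * A i j * x j

/-- Squared Frobenius norm. -/
def frob2 {n : ℕ} (A : Matrix (Fin n) (Fin n) ℝ) : ℝ :=
  ∑ i, ∑ j, (A i j) ^ 2

/-- Trace inner product `⟪A,B⟫ = tr(A^⊤ B)`. -/
def mdot {n : ℕ} (A B : Matrix (Fin n) (Fin n) ℝ) : ℝ :=
  ∑ i, ∑ j, A i j * B i j

/-- Euclidean inner product. -/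
def dot {n : ℕ} (v u : Fin n → ℝ) : ℝ := ∑ i, v i * u i

/-- Vector of diagonal entries of the Laplacian (degrees). -/
def degVec (n : ℕ) (w : Fin n → Fin n → ℝ) : Fin n → ℝ := fun i => lap n w i i

/-- `ℓ_∞` norm of a vector. -/
def supNorm {n : ℕ} (v : Fin n → ℝ) : ℝ := ⨆ i, |v i|

/-- `ℓ_2` norm of a vector. -/
def l2Norm {n : ℕ} (v : Fin n → ℝ) : ℝ := Real.sqrt (∑ i, (v i) ^ 2)

/-- Maximum absolute entry of a matrix. -/
def matSupNorm {n : ℕ} (A : Matrix (Fin n) (Fin n) ℝ) : ℝ := ⨆ i, ⨆ j, |A i j|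

open Classical in
/-- Empirical `p`-quantile of the values `v 1, …, v B`: the smallest value `a₀` in the
list such that the fraction of list entries `≤ a₀` is at least `p`. -/
def empQuantile {B : ℕ} (v : Fin B → ℝ) (p : ℝ) : ℝ :=
  sInf {t : ℝ | (∃ b, v b = t) ∧
    p ≤ ((Finset.univ.filter (fun b => v b ≤ t)).card : ℝ) / (B : ℝ)}

/-- CDF of the standard normal distribution. -/
def stdGaussCDF (t : ℝ) : ℝ := ((gaussianReal 0 1) (Set.Iic t)).toReal

/-- Kolmogorov distance between the laws of real random variables `X` (on `(Ω₁,μ)`) and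
`Y` (on `(Ω₂,ν)`). -/
def kolDist {Ω₁ Ω₂ : Type*} [MeasurableSpace Ω₁] [MeasurableSpace Ω₂]
    (μ : Measure Ω₁) (ν : Measure Ω₂) (X : Ω₁ → ℝ) (Y : Ω₂ → ℝ) : ℝ :=
  ⨆ t : ℝ, |(μ {ω | X ω ≤ t}).toReal - (ν {ω | Y ω ≤ t}).toReal|

/-- Kolmogorov distance between the law of `X` and the standard normal law. -/
def kolStdGauss {Ω : Type*} [MeasurableSpace Ω] (μ : Measure Ω) (X : Ω → ℝ) : ℝ :=
  ⨆ t : ℝ, |(μ {ω | X ω ≤ t}).toReal - stdGaussCDF t|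

/-- `G` is a centered Gaussian random vector with covariance matrix `R`:
every linear combination of coordinates is a centered Gaussian with the induced variance. -/
def IsGaussianVec {Ω : Type*} [MeasurableSpace Ω] (μ : Measure Ω) {m : ℕ}
    (G : Ω → Fin m → ℝ) (R : Matrix (Fin m) (Fin m) ℝ) : Prop :=
  ∀ c : Fin m → ℝ,
    Measure.map (fun ω => ∑ i, c i * G ω i) μ =
      gaussianReal 0 (Real.toNNReal (∑ i, ∑ j, c i * R i j * c j))

/-- Convergence in distribution to the standard normal law, for a sequence of real random
variables defined on (possibly varying) probability spaces, expressed via CDFs (the standard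
normal CDF is everywhere continuous, so this is equivalent to weak convergence). -/
def TendstoStdGauss (Ω : ℕ → Type) [∀ n, MeasurableSpace (Ω n)]
    (μ : ∀ n, Measure (Ω n)) (X : ∀ n, Ω n → ℝ) : Prop :=
  ∀ t : ℝ, Tendsto (fun n => ((μ n) {ω | X n ω ≤ t}).toReal) atTop (nhds (stdGaussCDF t))

/-- Convergence to `0` in probability for a sequence of real random variables on
(possibly varying) probability spaces. -/
def TendstoP0 (Ω : ℕ → Type) [∀ n, MeasurableSpace (Ω n)]
    (μ : ∀ n, Measure (Ω n)) (X : ∀ n, Ω n → ℝ) : Prop :=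
  ∀ ε : ℝ, 0 < ε →
    Tendsto (fun n => ((μ n) {ω | ε ≤ |X n ω|}).toReal) atTop (nhds 0)

end GS

namespace GSAux
open GS

variable {n : ℕ}

lemma sum3_comm {α : Type*} (s : Finset α) (f : Fin n → Fin n → α → ℝ) :
    ∑ i, ∑ j, ∑ a ∈ s, f i j a = ∑ a ∈ s, ∑ i, ∑ j, f i j a := by
  have h1 : ∀ i, ∑ j, ∑ a ∈ s, f i j a = ∑ a ∈ s, ∑ j, f i j a :=
    fun i => Finset.sum_comm
  simp_rw [h1]
  exact Finset.sum_comm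

lemma dot_edgeVec (p q : Fin n × Fin n) :
    dot (edgeVec n p) (edgeVec n q) =
      (if p.1 = q.1 then (1:ℝ) else 0) - (if p.1 = q.2 then 1 else 0)
      - (if p.2 = q.1 then 1 else 0) + (if p.2 = q.2 then 1 else 0) := by
  simp only [dot, edgeVec, sub_mul, mul_sub, Finset.sum_sub_distrib, ite_mul, mul_ite,
    one_mul, mul_one, mul_zero, zero_mul, Finset.sum_ite_eq', Finset.mem_univ, if_true]
  simp only [eq_comm]
  ring

lemma dot_comm (v u : Fin n → ℝ) : dot v u = dot u v := by
  simp [dot, mul_comm]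

lemma mdot_edgeMat (p q : Fin n × Fin n) :
    mdot (edgeMat n p) (edgeMat n q) = (dot (edgeVec n p) (edgeVec n q))^2 := by
  have : ∀ i j, edgeMat n p i j * edgeMat n q i j
      = (edgeVec n p i * edgeVec n q i) * (edgeVec n p j * edgeVec n q j) := by
    intro i j; simp [edgeMat, Matrix.vecMulVec_apply]; ring
  simp only [mdot, this]
  rw [← Finset.sum_mul_sum, ← GS.dot, sq]

lemma trace_edgeMat_mul (p q : Fin n × Fin n) :
    (edgeMat n p * edgeMat n q).trace = (dot (edgeVec n p) (edgeVec n q))^2 := by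
  have : ∀ i j, edgeMat n p i j * edgeMat n q j i
      = (edgeVec n p i * edgeVec n q i) * (edgeVec n p j * edgeVec n q j) := by
    intro i j; simp [edgeMat, Matrix.vecMulVec_apply]; ring
  simp only [Matrix.trace, Matrix.diag, Matrix.mul_apply, this]
  rw [← Finset.sum_mul_sum, ← GS.dot, sq]

lemma quad_edgeMat (x : Fin n → ℝ) (q : Fin n × Fin n) :
    quad (edgeMat n q) x = (dot x (edgeVec n q))^2 := by
  have : ∀ i j, x i * edgeMat n q i j * x j
      = (x i * edgeVec n q i) * (x j * edgeVec n q j) := by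
    intro i j; simp [edgeMat, Matrix.vecMulVec_apply]; ring
  simp only [quad, this]
  rw [← Finset.sum_mul_sum, ← GS.dot, sq]

lemma lap_apply (w : Fin n → Fin n → ℝ) (i j : Fin n) :
    lap n w i j = ∑ p ∈ pairs n, w p.1 p.2 * (edgeVec n p i * edgeVec n p j) := by
  simp [lap, Matrix.sum_apply, edgeMat, Matrix.vecMulVec_apply]

lemma lap_symm (w : Fin n → Fin n → ℝ) (i j : Fin n) : lap n w i j = lap n w j i := by
  simp only [lap_apply]
  exact Finset.sum_congr rfl fun p _ => by ring

lemma quad_lap (w : Fin n → Fin n → ℝ) (x : Fin n → ℝ) :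
    quad (lap n w) x = ∑ p ∈ pairs n, w p.1 p.2 * (dot x (edgeVec n p))^2 := by
  simp only [quad, lap_apply, Finset.mul_sum, Finset.sum_mul]
  rw [sum3_comm]
  refine Finset.sum_congr rfl fun p _ => ?_
  rw [← quad_edgeMat]
  simp only [quad, edgeMat, Matrix.vecMulVec_apply, Finset.mul_sum]
  exact Finset.sum_congr rfl fun i _ => Finset.sum_congr rfl fun j _ => by ring

lemma mdot_lap_left (w : Fin n → Fin n → ℝ) (B : Matrix (Fin n) (Fin n) ℝ) :
    mdot (lap n w) B = ∑ p ∈ pairs n, w p.1 p.2 * mdot (edgeMat n p) B := by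
  simp only [mdot, lap_apply, Finset.sum_mul, Finset.mul_sum]
  rw [sum3_comm]
  refine Finset.sum_congr rfl fun p _ => Finset.sum_congr rfl fun i _ =>
    Finset.sum_congr rfl fun j _ => ?_
  simp [edgeMat, Matrix.vecMulVec_apply]; ring

lemma mdot_comm (A B : Matrix (Fin n) (Fin n) ℝ) : mdot A B = mdot B A := by
  simp [mdot, mul_comm]

lemma mdot_lap_lap (w : Fin n → Fin n → ℝ) :
    mdot (lap n w) (lap n w) =
      ∑ p ∈ pairs n, ∑ q ∈ pairs n,
        w p.1 p.2 * w q.1 q.2 * (dot (edgeVec n p) (edgeVec n q))^2 := by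
  rw [mdot_lap_left]
  refine Finset.sum_congr rfl fun p _ => ?_
  rw [mdot_comm, mdot_lap_left, Finset.mul_sum]
  refine Finset.sum_congr rfl fun q _ => ?_
  rw [mdot_edgeMat, dot_comm]
  ring

lemma trace_lap_sq (w : Fin n → Fin n → ℝ) :
    (lap n w * lap n w).trace = mdot (lap n w) (lap n w) := by
  simp only [Matrix.trace, Matrix.diag, Matrix.mul_apply, mdot]
  exact Finset.sum_congr rfl fun i _ => Finset.sum_congr rfl fun j _ => by
    rw [lap_symm w j i]

lemma frob2_sub (A B : Matrix (Fin n) (Fin n) ℝ) :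
    frob2 (A - B) = mdot A A - 2 * mdot A B + mdot B B := by
  have : ∀ i j, (A - B) i j ^ 2
      = A i j * A i j - 2 * (A i j * B i j) + B i j * B i j := by
    intro i j; simp [Matrix.sub_apply]; ring
  simp only [frob2, this, Finset.sum_add_distrib, Finset.sum_sub_distrib, mdot,
    Finset.mul_sum]

end GSAux

namespace GSAux
open GS
variable {n : ℕ}

lemma dot_self_eq_two (p : Fin n × Fin n) (hp : p.1 < p.2) :
    dot (edgeVec n p) (edgeVec n p) = 2 := by
  rw [dot_edgeVec]
  have h : p.1 ≠ p.2 := ne_of_lt hp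
  simp [h, h.symm]
  norm_num

lemma edge_prod (p q : Fin n × Fin n) (hp : p.1 < p.2) (hq : q.1 < q.2) :
    edgeVec n q p.1 * edgeVec n q p.2 = if q = p then (-1:ℝ) else 0 := by
  simp only [edgeVec]
  by_cases h1 : p.1 = q.1 <;> by_cases h2 : p.1 = q.2 <;>
    by_cases h3 : p.2 = q.1 <;> by_cases h4 : p.2 = q.2 <;>
    simp only [h1, h2, h3, h4, if_true, if_false, Prod.ext_iff] <;>
    simp_all only [Fin.ext_iff, Fin.lt_def] <;>
    first
      | (exfalso; omega)
      | (split_ifs <;> (try norm_num) <;> omega)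
      | norm_num

lemma dot_pow4 (p q : Fin n × Fin n) (hp : p.1 < p.2) (hq : q.1 < q.2) :
    (dot (edgeVec n p) (edgeVec n q))^4
      = (dot (edgeVec n p) (edgeVec n q))^2 + if p = q then (12:ℝ) else 0 := by
  rw [dot_edgeVec]
  by_cases h1 : p.1 = q.1 <;> by_cases h2 : p.1 = q.2 <;>
    by_cases h3 : p.2 = q.1 <;> by_cases h4 : p.2 = q.2 <;>
    simp only [h1, h2, h3, h4, if_true, if_false, Prod.ext_iff] <;>
    simp_all only [Fin.ext_iff, Fin.lt_def] <;>
    first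
      | (exfalso; omega)
      | (split_ifs <;> (try norm_num) <;> omega)
      | norm_num

lemma lap_offdiag (w : Fin n → Fin n → ℝ) (p : Fin n × Fin n) (hp : p ∈ pairs n) :
    lap n w p.1 p.2 = -(w p.1 p.2) := by
  have hp1 : p.1 < p.2 := by
    have := hp; simp only [GS.pairs, Finset.mem_filter] at this; exact this.2
  rw [lap_apply]
  have : ∀ q ∈ pairs n, w q.1 q.2 * (edgeVec n q p.1 * edgeVec n q p.2)
      = if q = p then -(w q.1 q.2) else 0 := by
    intro q hq
    have hq1 : q.1 < q.2 := by
      have := hq; simp only [GS.pairs, Finset.mem_filter] at this; exact this.2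
    rw [edge_prod p q hp1 hq1]
    split_ifs <;> ring
  rw [Finset.sum_congr rfl this, Finset.sum_ite_eq' (pairs n) p (fun q => -(w q.1 q.2)),
    if_pos hp]

end GSAux

namespace GSAux
open GS
variable {n : ℕ}

lemma integ_comp {Ω : Type} [MeasurableSpace Ω] (μ : Measure Ω) [IsProbabilityMeasure μ]
    {γ : Type*} [Fintype γ] [MeasurableSpace γ] [DiscreteMeasurableSpace γ]
    (X : Ω → γ) (hX : Measurable X) (f : γ → ℝ) :
    Integrable (fun ω => f (X ω)) μ := by
  have hm : Measurable fun ω => f (X ω) := (Measurable.of_discrete (f := f)).comp hX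
  refine (integrable_const (∑ x : γ, |f x|)).mono' hm.aestronglyMeasurable ?_
  filter_upwards with ω
  simp only [Real.norm_eq_abs]
  exact Finset.single_le_sum (fun x _ => abs_nonneg (f x)) (Finset.mem_univ (X ω))

section prob
variable {N : ℕ} {w : Fin n → Fin n → ℝ}
  {Ω : Type} [MeasurableSpace Ω] {μ : Measure Ω} [IsProbabilityMeasure μ]
  {e : Fin N → Ω → Fin n × Fin n}

lemma measure_singleton_toReal (hw0 : ∀ i j, 0 ≤ w i j)
    (hedist : ∀ k p, μ {ω | e k ω = p} =
      if p.1 < p.2 then ENNReal.ofReal (w p.1 p.2) else 0)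
    (k : Fin N) (p : Fin n × Fin n) :
    (μ (e k ⁻¹' {p})).toReal = if p.1 < p.2 then w p.1 p.2 else 0 := by
  have hs : e k ⁻¹' {p} = {ω | e k ω = p} := rfl
  rw [hs, hedist k p]
  split_ifs
  · exact ENNReal.toReal_ofReal (hw0 _ _)
  · rfl

lemma expect1 (hw0 : ∀ i j, 0 ≤ w i j)
    (hemeas : ∀ k, Measurable (e k))
    (hedist : ∀ k p, μ {ω | e k ω = p} =
      if p.1 < p.2 then ENNReal.ofReal (w p.1 p.2) else 0)
    (k : Fin N) (f : Fin n × Fin n → ℝ) :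
    (∫ ω, f (e k ω) ∂μ) = ∑ p ∈ pairs n, w p.1 p.2 * f p := by
  have hrep : (fun ω => f (e k ω)) = fun ω => ∑ p : Fin n × Fin n,
      Set.indicator (e k ⁻¹' {p}) (fun _ => f p) ω := by
    funext ω
    have h1 : ∀ p : Fin n × Fin n,
        Set.indicator (e k ⁻¹' {p}) (fun _ => f p) ω = if e k ω = p then f p else 0 := by
      intro p
      classical
      rw [Set.indicator_apply]
      simp [Set.mem_preimage]
    simp only [h1]
    rw [Finset.sum_ite_eq]
    simp
  rw [hrep, integral_finset_sum _
    (fun p _ => (integrable_const (f p)).indicator ((hemeas k) (measurableSet_singleton p)))]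
  rw [Finset.sum_congr rfl
    (fun p _ => integral_indicator_const (f p) ((hemeas k) (measurableSet_singleton p)))]
  rw [Finset.sum_congr rfl
    (fun p _ => by rw [measureReal_def, measure_singleton_toReal hw0 hedist k p])]
  simp only [smul_eq_mul, ite_mul, zero_mul]
  rw [← Finset.sum_filter]
  rfl

end prob
end GSAux

namespace GSAux
open GS
variable {n : ℕ} {N : ℕ} {w : Fin n → Fin n → ℝ}
  {Ω : Type} [MeasurableSpace Ω] {μ : Measure Ω} [IsProbabilityMeasure μ]
  {e : Fin N → Ω → Fin n × Fin n}

lemma expect2 (hw0 : ∀ i j, 0 ≤ w i j)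
    (hemeas : ∀ k, Measurable (e k))
    (heind : iIndepFun e μ)
    (hedist : ∀ k p, μ {ω | e k ω = p} =
      if p.1 < p.2 then ENNReal.ofReal (w p.1 p.2) else 0)
    (k0 k1 : Fin N) (h01 : k0 ≠ k1) (F : Fin n × Fin n → Fin n × Fin n → ℝ) :
    (∫ ω, F (e k0 ω) (e k1 ω) ∂μ) =
      ∑ p ∈ pairs n, ∑ q ∈ pairs n, w p.1 p.2 * w q.1 q.2 * F p q := by
  classical
  have hS : ∀ p q : Fin n × Fin n, MeasurableSet ((e k0 ⁻¹' {p}) ∩ (e k1 ⁻¹' {q})) :=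
    fun p q => ((hemeas k0) (measurableSet_singleton p)).inter
      ((hemeas k1) (measurableSet_singleton q))
  have hrep : (fun ω => F (e k0 ω) (e k1 ω)) = fun ω => ∑ p : Fin n × Fin n,
      ∑ q : Fin n × Fin n,
        Set.indicator ((e k0 ⁻¹' {p}) ∩ (e k1 ⁻¹' {q})) (fun _ => F p q) ω := by
    funext ω
    have h1 : ∀ p q : Fin n × Fin n,
        Set.indicator ((e k0 ⁻¹' {p}) ∩ (e k1 ⁻¹' {q})) (fun _ => F p q) ω
          = if e k0 ω = p then (if e k1 ω = q then F p q else 0) else 0 := by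
      intro p q
      rw [Set.indicator_apply]
      by_cases hA : e k0 ω = p <;> by_cases hB : e k1 ω = q <;>
        simp [Set.mem_inter_iff, Set.mem_preimage, hA, hB]
    simp only [h1, Finset.sum_ite_irrel, Finset.sum_const_zero, Finset.sum_ite_eq,
      Finset.mem_univ, if_true]
  rw [hrep, integral_finset_sum _
    (fun p _ => integrable_finset_sum _
      (fun q _ => (integrable_const (F p q)).indicator (hS p q)))]
  rw [Finset.sum_congr rfl (fun p _ => integral_finset_sum _
      (fun q _ => (integrable_const (F p q)).indicator (hS p q)))]
  rw [Finset.sum_congr rfl (fun p _ => Finset.sum_congr rfl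
      (fun q _ => integral_indicator_const (F p q) (hS p q)))]
  have hmul : ∀ p q : Fin n × Fin n, (μ ((e k0 ⁻¹' {p}) ∩ (e k1 ⁻¹' {q}))).toReal
      = (if p.1 < p.2 then w p.1 p.2 else 0) * (if q.1 < q.2 then w q.1 q.2 else 0) := by
    intro p q
    rw [(heind.indepFun h01).measure_inter_preimage_eq_mul {p} {q}
      (measurableSet_singleton p) (measurableSet_singleton q), ENNReal.toReal_mul,
      measure_singleton_toReal hw0 hedist, measure_singleton_toReal hw0 hedist]
  simp only [measureReal_def, hmul, smul_eq_mul, ite_mul, zero_mul, mul_ite, mul_zero]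
  simp only [Finset.sum_ite_irrel, Finset.sum_const_zero, ← Finset.sum_filter]
  rfl

lemma expect3 (hw0 : ∀ i j, 0 ≤ w i j)
    (hemeas : ∀ k, Measurable (e k))
    (heind : iIndepFun e μ)
    (hedist : ∀ k p, μ {ω | e k ω = p} =
      if p.1 < p.2 then ENNReal.ofReal (w p.1 p.2) else 0)
    (k0 k1 k2 : Fin N) (h01 : k0 ≠ k1) (h02 : k0 ≠ k2) (h12 : k1 ≠ k2)
    (F : Fin n × Fin n → Fin n × Fin n → Fin n × Fin n → ℝ) :
    (∫ ω, F (e k0 ω) (e k1 ω) (e k2 ω) ∂μ) =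
      ∑ p ∈ pairs n, ∑ q ∈ pairs n, ∑ r ∈ pairs n,
        w p.1 p.2 * w q.1 q.2 * w r.1 r.2 * F p q r := by
  classical
  have hS : ∀ p q r : Fin n × Fin n,
      MeasurableSet ((e k0 ⁻¹' {p}) ∩ ((e k1 ⁻¹' {q}) ∩ (e k2 ⁻¹' {r}))) :=
    fun p q r => ((hemeas k0) (measurableSet_singleton p)).inter
      (((hemeas k1) (measurableSet_singleton q)).inter
        ((hemeas k2) (measurableSet_singleton r)))
  have hrep : (fun ω => F (e k0 ω) (e k1 ω) (e k2 ω)) = fun ω => ∑ p : Fin n × Fin n,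
      ∑ q : Fin n × Fin n, ∑ r : Fin n × Fin n,
        Set.indicator ((e k0 ⁻¹' {p}) ∩ ((e k1 ⁻¹' {q}) ∩ (e k2 ⁻¹' {r})))
          (fun _ => F p q r) ω := by
    funext ω
    have h1 : ∀ p q r : Fin n × Fin n,
        Set.indicator ((e k0 ⁻¹' {p}) ∩ ((e k1 ⁻¹' {q}) ∩ (e k2 ⁻¹' {r})))
            (fun _ => F p q r) ω
          = if e k0 ω = p then (if e k1 ω = q then (if e k2 ω = r then F p q r else 0)
              else 0) else 0 := by
      intro p q r
      rw [Set.indicator_apply]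
      by_cases hA : e k0 ω = p <;> by_cases hB : e k1 ω = q <;> by_cases hC : e k2 ω = r <;>
        simp [Set.mem_inter_iff, Set.mem_preimage, hA, hB, hC]
    simp only [h1, Finset.sum_ite_irrel, Finset.sum_const_zero, Finset.sum_ite_eq,
      Finset.mem_univ, if_true]
  rw [hrep, integral_finset_sum _
    (fun p _ => integrable_finset_sum _ (fun q _ => integrable_finset_sum _
      (fun r _ => (integrable_const (F p q r)).indicator (hS p q r))))]
  rw [Finset.sum_congr rfl (fun p _ => integral_finset_sum _
      (fun q _ => integrable_finset_sum _
        (fun r _ => (integrable_const (F p q r)).indicator (hS p q r))))]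
  rw [Finset.sum_congr rfl (fun p _ => Finset.sum_congr rfl
      (fun q _ => integral_finset_sum _
        (fun r _ => (integrable_const (F p q r)).indicator (hS p q r))))]
  rw [Finset.sum_congr rfl (fun p _ => Finset.sum_congr rfl
      (fun q _ => Finset.sum_congr rfl
        (fun r _ => integral_indicator_const (F p q r) (hS p q r))))]
  have hmul : ∀ p q r : Fin n × Fin n,
      (μ ((e k0 ⁻¹' {p}) ∩ ((e k1 ⁻¹' {q}) ∩ (e k2 ⁻¹' {r})))).toReal
      = (if p.1 < p.2 then w p.1 p.2 else 0) * ((if q.1 < q.2 then w q.1 q.2 else 0)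
          * (if r.1 < r.2 then w r.1 r.2 else 0)) := by
    intro p q r
    set sets : Fin N → Set (Fin n × Fin n) := fun i =>
      if i = k0 then {p} else if i = k1 then {q} else if i = k2 then {r} else Set.univ
      with hsets
    have hmeas : ∀ i ∈ ({k0, k1, k2} : Finset (Fin N)), MeasurableSet (sets i) :=
      fun i _ => MeasurableSet.of_discrete
    have key := heind.measure_inter_preimage_eq_mul ({k0, k1, k2} : Finset (Fin N)) hmeas
    have hs0 : sets k0 = {p} := by simp [hsets]
    have hs1 : sets k1 = {q} := by simp [hsets, (Ne.symm h01 : k1 ≠ k0)]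
    have hs2 : sets k2 = {r} := by simp [hsets, (Ne.symm h02 : k2 ≠ k0), (Ne.symm h12 : k2 ≠ k1)]
    have hL : (⋂ i ∈ ({k0, k1, k2} : Finset (Fin N)), e i ⁻¹' sets i)
        = (e k0 ⁻¹' {p}) ∩ ((e k1 ⁻¹' {q}) ∩ (e k2 ⁻¹' {r})) := by
      rw [Finset.set_biInter_insert, Finset.set_biInter_insert,
        Finset.set_biInter_singleton, hs0, hs1, hs2]
    have hn0 : k0 ∉ ({k1, k2} : Finset (Fin N)) := by simp [h01, h02]
    have hn1 : k1 ∉ ({k2} : Finset (Fin N)) := by simp [h12]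
    have hR : ∏ i ∈ ({k0, k1, k2} : Finset (Fin N)), μ (e i ⁻¹' sets i)
        = μ (e k0 ⁻¹' {p}) * (μ (e k1 ⁻¹' {q}) * μ (e k2 ⁻¹' {r})) := by
      rw [Finset.prod_insert hn0, Finset.prod_insert hn1, Finset.prod_singleton,
        hs0, hs1, hs2]
    rw [hL, hR] at key
    rw [key, ENNReal.toReal_mul, ENNReal.toReal_mul,
      measure_singleton_toReal hw0 hedist, measure_singleton_toReal hw0 hedist,
      measure_singleton_toReal hw0 hedist]
  simp only [measureReal_def, hmul, smul_eq_mul, ite_mul, zero_mul, mul_ite, mul_zero]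
  simp only [Finset.sum_ite_irrel, Finset.sum_const_zero, ← Finset.sum_filter]
  refine Finset.sum_congr rfl fun p _ => Finset.sum_congr rfl fun q _ =>
    Finset.sum_congr rfl fun r _ => by ring

end GSAux

namespace GSAux
open GS
variable {n : ℕ}

lemma quad_edgeVec (A : Matrix (Fin n) (Fin n) ℝ) (p : Fin n × Fin n) :
    quad A (edgeVec n p) = A p.1 p.1 - A p.1 p.2 - A p.2 p.1 + A p.2 p.2 := by
  simp only [quad, edgeVec, sub_mul, mul_sub, Finset.sum_sub_distrib, ite_mul, zero_mul,
    one_mul, mul_ite, mul_zero, mul_one, Finset.sum_ite_eq', Finset.mem_univ, if_true]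
  ring

lemma mem_pairs {p : Fin n × Fin n} : p ∈ pairs n ↔ p.1 < p.2 := by
  simp [GS.pairs]

lemma sparse_symm (N : ℕ) (qf : Fin N → Fin n × Fin n) (i j : Fin n) :
    sparseLap n N qf i j = sparseLap n N qf j i := by
  simp only [sparseLap, Matrix.smul_apply, Matrix.sum_apply, edgeMat,
    Matrix.vecMulVec_apply, smul_eq_mul]
  congr 1
  exact Finset.sum_congr rfl fun k _ => mul_comm _ _

lemma sparse_trace (N : ℕ) (qf : Fin N → Fin n × Fin n) :
    (sparseLap n N qf * sparseLap n N qf).trace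
      = (N:ℝ)⁻¹ * (N:ℝ)⁻¹ * ∑ k : Fin N, ∑ l : Fin N,
          (dot (edgeVec n (qf k)) (edgeVec n (qf l)))^2 := by
  simp only [sparseLap, Matrix.smul_mul, Matrix.mul_smul, smul_smul, Matrix.trace_smul,
    Finset.sum_mul_sum, Matrix.trace_sum, trace_edgeMat_mul, smul_eq_mul, mul_assoc]

lemma mdot_sparse_self (N : ℕ) (qf : Fin N → Fin n × Fin n) :
    mdot (sparseLap n N qf) (sparseLap n N qf)
      = (sparseLap n N qf * sparseLap n N qf).trace := by
  simp only [mdot, Matrix.trace, Matrix.diag, Matrix.mul_apply]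
  exact Finset.sum_congr rfl fun i _ => Finset.sum_congr rfl fun j _ => by
    rw [sparse_symm N qf j i]

lemma mdot_sparse_lap (N : ℕ) (qf : Fin N → Fin n × Fin n) (w : Fin n → Fin n → ℝ) :
    mdot (sparseLap n N qf) (lap n w)
      = (N:ℝ)⁻¹ * ∑ k : Fin N, mdot (edgeMat n (qf k)) (lap n w) := by
  calc mdot (sparseLap n N qf) (lap n w)
      = ∑ i, ∑ j, ∑ k : Fin N, (N:ℝ)⁻¹ * (edgeMat n (qf k) i j * lap n w i j) := by
        simp only [mdot, sparseLap, Matrix.smul_apply, Matrix.sum_apply, smul_eq_mul,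
          Finset.sum_mul, Finset.mul_sum, mul_assoc]
    _ = ∑ k : Fin N, ∑ i, ∑ j, (N:ℝ)⁻¹ * (edgeMat n (qf k) i j * lap n w i j) :=
        sum3_comm _ _
    _ = (N:ℝ)⁻¹ * ∑ k : Fin N, mdot (edgeMat n (qf k)) (lap n w) := by
        rw [Finset.mul_sum]
        exact Finset.sum_congr rfl fun k _ => by
          simp only [mdot, Finset.mul_sum]

end GSAux


/-- moment identities, Appendix F. For a weighted graph with edge weights
summing to 1 and Laplacian `L`, with `D_k = δ_{ê_k}` for i.i.d. edge-weight–sampled edges and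
`L̂ = (1/N) ∑_k D_k D_k^⊤`:
`E(D₁D₁^⊤) = L`, `E((D₁^⊤D₂)²) = tr(L²)`, `E((D₁^⊤D₂)⁴) = tr(L²) + 12 ∑_{i<j} L_{ij}²`,
`E((D₁^⊤D₂)²(D₁^⊤D₃)²) = ∑_{i<j} |L_{ij}| (L_{ii}+L_{jj}+2|L_{ij}|)²`,
`E(‖L̂-L‖_F²) = (4 - tr(L²))/N`, and `E(tr(L̂²)) = 4/N + ((N-1)/N) tr(L²)`. -/
theorem stmt19
    (n N : ℕ) (hn : 2 ≤ n) (hN : 3 ≤ N)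
    (w : Fin n → Fin n → ℝ)
    (hw0 : ∀ i j, 0 ≤ w i j)
    (hw1 : ∑ p ∈ GS.pairs n, w p.1 p.2 = 1)
    (Ω : Type) [MeasurableSpace Ω] (μ : Measure Ω) [IsProbabilityMeasure μ]
    (e : Fin N → Ω → Fin n × Fin n)
    (hemeas : ∀ k, Measurable (e k))
    (heind : iIndepFun e μ)
    (hedist : ∀ k p, μ {ω | e k ω = p} =
      if p.1 < p.2 then ENNReal.ofReal (w p.1 p.2) else 0) :
    (∀ i j, (∫ ω, GS.edgeMat n (e ⟨0, by omega⟩ ω) i j ∂μ) = GS.lap n w i j)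
    ∧ (∫ ω, (GS.dot (GS.edgeVec n (e ⟨0, by omega⟩ ω)) (GS.edgeVec n (e ⟨1, by omega⟩ ω))) ^ 2 ∂μ)
        = (GS.lap n w * GS.lap n w).trace
    ∧ (∫ ω, (GS.dot (GS.edgeVec n (e ⟨0, by omega⟩ ω)) (GS.edgeVec n (e ⟨1, by omega⟩ ω))) ^ 4 ∂μ)
        = (GS.lap n w * GS.lap n w).trace + 12 * ∑ p ∈ GS.pairs n, (GS.lap n w p.1 p.2) ^ 2
    ∧ (∫ ω, (GS.dot (GS.edgeVec n (e ⟨0, by omega⟩ ω)) (GS.edgeVec n (e ⟨1, by omega⟩ ω))) ^ 2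
          * (GS.dot (GS.edgeVec n (e ⟨0, by omega⟩ ω)) (GS.edgeVec n (e ⟨2, by omega⟩ ω))) ^ 2 ∂μ)
        = ∑ p ∈ GS.pairs n, |GS.lap n w p.1 p.2|
            * (GS.lap n w p.1 p.1 + GS.lap n w p.2 p.2 + 2 * |GS.lap n w p.1 p.2|) ^ 2
    ∧ (∫ ω, GS.frob2 (GS.sparseLap n N (fun k => e k ω) - GS.lap n w) ∂μ)
        = (4 - (GS.lap n w * GS.lap n w).trace) / N
    ∧ (∫ ω, (GS.sparseLap n N (fun k => e k ω) * GS.sparseLap n N (fun k => e k ω)).trace ∂μ)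
        = 4 / N + ((N : ℝ) - 1) / N * (GS.lap n w * GS.lap n w).trace := by
  classical
  have hNne : (N : ℝ) ≠ 0 := Nat.cast_ne_zero.mpr (by omega)
  have hne01 : (⟨0, by omega⟩ : Fin N) ≠ ⟨1, by omega⟩ := by simp [Fin.ext_iff]
  have hne02 : (⟨0, by omega⟩ : Fin N) ≠ ⟨2, by omega⟩ := by simp [Fin.ext_iff]
  have hne12 : (⟨1, by omega⟩ : Fin N) ≠ ⟨2, by omega⟩ := by simp [Fin.ext_iff]
  have hinteg1 : ∀ (k : Fin N) (f : (Fin n × Fin n) → ℝ),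
      Integrable (fun ω => f (e k ω)) μ :=
    fun k f => GSAux.integ_comp μ (e k) (hemeas k) f
  have hinteg2 : ∀ (k l : Fin N) (F : (Fin n × Fin n) → (Fin n × Fin n) → ℝ),
      Integrable (fun ω => F (e k ω) (e l ω)) μ :=
    fun k l F => GSAux.integ_comp μ (fun ω => (e k ω, e l ω))
      ((hemeas k).prodMk (hemeas l)) (fun z => F z.1 z.2)
  have hint : ∀ k l : Fin N,
      (∫ ω, (GS.dot (GS.edgeVec n (e k ω)) (GS.edgeVec n (e l ω))) ^ 2 ∂μ)
        = if k = l then (4:ℝ) else (GS.lap n w * GS.lap n w).trace := by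
    intro k l
    by_cases hkl : k = l
    · subst hkl
      rw [if_pos rfl]
      refine (GSAux.expect1 hw0 hemeas hedist k
        (fun p => (GS.dot (GS.edgeVec n p) (GS.edgeVec n p)) ^ 2)).trans ?_
      calc ∑ p ∈ GS.pairs n, w p.1 p.2 * (GS.dot (GS.edgeVec n p) (GS.edgeVec n p)) ^ 2
          = ∑ p ∈ GS.pairs n, w p.1 p.2 * 4 := Finset.sum_congr rfl fun p hp => by
            rw [GSAux.dot_self_eq_two p (GSAux.mem_pairs.mp hp)]; norm_num
        _ = 4 := by rw [← Finset.sum_mul, hw1]; norm_num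
    · rw [if_neg hkl]
      refine (GSAux.expect2 hw0 hemeas heind hedist k l hkl
        (fun p q => (GS.dot (GS.edgeVec n p) (GS.edgeVec n q)) ^ 2)).trans ?_
      rw [GSAux.trace_lap_sq, GSAux.mdot_lap_lap]
  have hrow : ∀ k : Fin N, ∑ l : Fin N,
      (if k = l then (4:ℝ) else (GS.lap n w * GS.lap n w).trace)
        = (N:ℝ) * (GS.lap n w * GS.lap n w).trace
          + (4 - (GS.lap n w * GS.lap n w).trace) := by
    intro k
    have h : ∀ l : Fin N, (if k = l then (4:ℝ) else (GS.lap n w * GS.lap n w).trace)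
        = (GS.lap n w * GS.lap n w).trace
          + (if k = l then 4 - (GS.lap n w * GS.lap n w).trace else 0) := by
      intro l; split_ifs <;> ring
    simp only [h, Finset.sum_add_distrib, Finset.sum_const, Finset.card_univ,
      Fintype.card_fin, nsmul_eq_mul, Finset.sum_ite_eq, Finset.mem_univ, if_true]
  have hsumSq : (∫ ω, ∑ k : Fin N, ∑ l : Fin N,
        (GS.dot (GS.edgeVec n (e k ω)) (GS.edgeVec n (e l ω))) ^ 2 ∂μ)
      = (N:ℝ) * ((N:ℝ) * (GS.lap n w * GS.lap n w).trace
          + (4 - (GS.lap n w * GS.lap n w).trace)) := by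
    rw [integral_finset_sum _ (fun k _ => integrable_finset_sum _ (fun l _ =>
      hinteg2 k l (fun p q => (GS.dot (GS.edgeVec n p) (GS.edgeVec n q)) ^ 2)))]
    rw [Finset.sum_congr rfl (fun k _ => integral_finset_sum _ (fun l _ =>
      hinteg2 k l (fun p q => (GS.dot (GS.edgeVec n p) (GS.edgeVec n q)) ^ 2)))]
    rw [Finset.sum_congr rfl (fun k _ => Finset.sum_congr rfl (fun l _ => hint k l))]
    simp only [hrow, Finset.sum_const, Finset.card_univ, Fintype.card_fin, nsmul_eq_mul]
  have hmdotLap : ∀ k : Fin N,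
      (∫ ω, GS.mdot (GS.edgeMat n (e k ω)) (GS.lap n w) ∂μ)
        = GS.mdot (GS.lap n w) (GS.lap n w) := by
    intro k
    refine (GSAux.expect1 hw0 hemeas hedist k
      (fun p => GS.mdot (GS.edgeMat n p) (GS.lap n w))).trans ?_
    exact (GSAux.mdot_lap_left w (GS.lap n w)).symm
  refine ⟨?_, ?_, ?_, ?_, ?_, ?_⟩
  · -- Part 1
    intro i j
    refine (GSAux.expect1 hw0 hemeas hedist _ (fun p => GS.edgeMat n p i j)).trans ?_
    rw [GSAux.lap_apply]
    exact Finset.sum_congr rfl fun p _ => by simp [GS.edgeMat, Matrix.vecMulVec_apply]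
  · -- Part 2
    refine (GSAux.expect2 hw0 hemeas heind hedist _ _ hne01
      (fun p q => (GS.dot (GS.edgeVec n p) (GS.edgeVec n q)) ^ 2)).trans ?_
    rw [GSAux.trace_lap_sq, GSAux.mdot_lap_lap]
  · -- Part 3
    refine (GSAux.expect2 hw0 hemeas heind hedist _ _ hne01
      (fun p q => (GS.dot (GS.edgeVec n p) (GS.edgeVec n q)) ^ 4)).trans ?_
    have step : ∀ p ∈ GS.pairs n, ∀ q ∈ GS.pairs n,
        w p.1 p.2 * w q.1 q.2 * (GS.dot (GS.edgeVec n p) (GS.edgeVec n q)) ^ 4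
          = w p.1 p.2 * w q.1 q.2 * (GS.dot (GS.edgeVec n p) (GS.edgeVec n q)) ^ 2
            + (if p = q then w p.1 p.2 * w q.1 q.2 * 12 else 0) := by
      intro p hp q hq
      rw [GSAux.dot_pow4 p q (GSAux.mem_pairs.mp hp) (GSAux.mem_pairs.mp hq)]
      split_ifs <;> ring
    calc ∑ p ∈ GS.pairs n, ∑ q ∈ GS.pairs n,
          w p.1 p.2 * w q.1 q.2 * (GS.dot (GS.edgeVec n p) (GS.edgeVec n q)) ^ 4
        = ∑ p ∈ GS.pairs n, ∑ q ∈ GS.pairs n,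
            (w p.1 p.2 * w q.1 q.2 * (GS.dot (GS.edgeVec n p) (GS.edgeVec n q)) ^ 2
              + (if p = q then w p.1 p.2 * w q.1 q.2 * 12 else 0)) :=
          Finset.sum_congr rfl fun p hp => Finset.sum_congr rfl fun q hq =>
            step p hp q hq
      _ = (∑ p ∈ GS.pairs n, ∑ q ∈ GS.pairs n,
            w p.1 p.2 * w q.1 q.2 * (GS.dot (GS.edgeVec n p) (GS.edgeVec n q)) ^ 2)
          + ∑ p ∈ GS.pairs n, ∑ q ∈ GS.pairs n,
            (if p = q then w p.1 p.2 * w q.1 q.2 * 12 else 0) := by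
          simp only [Finset.sum_add_distrib]
      _ = (GS.lap n w * GS.lap n w).trace
          + 12 * ∑ p ∈ GS.pairs n, (GS.lap n w p.1 p.2) ^ 2 := by
          congr 1
          · rw [GSAux.trace_lap_sq, GSAux.mdot_lap_lap]
          · rw [Finset.mul_sum]
            refine Finset.sum_congr rfl fun p hp => ?_
            rw [Finset.sum_ite_eq (GS.pairs n) p
              (fun q => w p.1 p.2 * w q.1 q.2 * 12), if_pos hp,
              GSAux.lap_offdiag w p hp]
            ring
  · -- Part 4
    refine (GSAux.expect3 hw0 hemeas heind hedist _ _ _ hne01 hne02 hne12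
      (fun p q r => (GS.dot (GS.edgeVec n p) (GS.edgeVec n q)) ^ 2
        * (GS.dot (GS.edgeVec n p) (GS.edgeVec n r)) ^ 2)).trans ?_
    refine Finset.sum_congr rfl fun p hp => ?_
    have hQ : ∑ q ∈ GS.pairs n, w q.1 q.2 * (GS.dot (GS.edgeVec n p) (GS.edgeVec n q)) ^ 2
        = GS.quad (GS.lap n w) (GS.edgeVec n p) := (GSAux.quad_lap w (GS.edgeVec n p)).symm
    have habs : |GS.lap n w p.1 p.2| = w p.1 p.2 := by
      rw [GSAux.lap_offdiag w p hp, abs_neg, abs_of_nonneg (hw0 _ _)]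
    have hquad : GS.quad (GS.lap n w) (GS.edgeVec n p)
        = GS.lap n w p.1 p.1 + GS.lap n w p.2 p.2 + 2 * w p.1 p.2 := by
      rw [GSAux.quad_edgeVec, GSAux.lap_symm w p.2 p.1, GSAux.lap_offdiag w p hp]
      ring
    calc ∑ q ∈ GS.pairs n, ∑ r ∈ GS.pairs n,
          w p.1 p.2 * w q.1 q.2 * w r.1 r.2
            * ((GS.dot (GS.edgeVec n p) (GS.edgeVec n q)) ^ 2
              * (GS.dot (GS.edgeVec n p) (GS.edgeVec n r)) ^ 2)
        = w p.1 p.2 * ((∑ q ∈ GS.pairs n,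
            w q.1 q.2 * (GS.dot (GS.edgeVec n p) (GS.edgeVec n q)) ^ 2)
          * (∑ r ∈ GS.pairs n,
            w r.1 r.2 * (GS.dot (GS.edgeVec n p) (GS.edgeVec n r)) ^ 2)) := by
          rw [Finset.sum_mul_sum, Finset.mul_sum]
          refine Finset.sum_congr rfl fun q hq => ?_
          rw [Finset.mul_sum]
          exact Finset.sum_congr rfl fun r hr => by ring
      _ = |GS.lap n w p.1 p.2|
            * (GS.lap n w p.1 p.1 + GS.lap n w p.2 p.2
              + 2 * |GS.lap n w p.1 p.2|) ^ 2 := by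
          rw [hQ, hquad, habs]
          ring
  · -- Part 5
    have hpt : (fun ω => GS.frob2 (GS.sparseLap n N (fun k => e k ω) - GS.lap n w))
        = fun ω => ((N:ℝ)⁻¹ * (N:ℝ)⁻¹ * ∑ k : Fin N, ∑ l : Fin N,
              (GS.dot (GS.edgeVec n (e k ω)) (GS.edgeVec n (e l ω))) ^ 2)
            - 2 * ((N:ℝ)⁻¹ * ∑ k : Fin N, GS.mdot (GS.edgeMat n (e k ω)) (GS.lap n w))
            + GS.mdot (GS.lap n w) (GS.lap n w) := by
      funext ω
      rw [GSAux.frob2_sub, GSAux.mdot_sparse_self, GSAux.sparse_trace,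
        GSAux.mdot_sparse_lap]
    rw [hpt]
    have hf1 : Integrable (fun ω => (N:ℝ)⁻¹ * (N:ℝ)⁻¹ * ∑ k : Fin N, ∑ l : Fin N,
        (GS.dot (GS.edgeVec n (e k ω)) (GS.edgeVec n (e l ω))) ^ 2) μ :=
      (integrable_finset_sum _ (fun k _ => integrable_finset_sum _ (fun l _ =>
        hinteg2 k l (fun p q => (GS.dot (GS.edgeVec n p) (GS.edgeVec n q)) ^ 2)))).const_mul _
    have hf2 : Integrable (fun ω => 2 * ((N:ℝ)⁻¹ * ∑ k : Fin N,
        GS.mdot (GS.edgeMat n (e k ω)) (GS.lap n w))) μ :=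
      (((integrable_finset_sum _ (fun k _ =>
        hinteg1 k (fun p => GS.mdot (GS.edgeMat n p) (GS.lap n w))))).const_mul _).const_mul 2
    have hf12 : Integrable (fun ω => ((N:ℝ)⁻¹ * (N:ℝ)⁻¹ * ∑ k : Fin N, ∑ l : Fin N,
        (GS.dot (GS.edgeVec n (e k ω)) (GS.edgeVec n (e l ω))) ^ 2)
        - 2 * ((N:ℝ)⁻¹ * ∑ k : Fin N,
            GS.mdot (GS.edgeMat n (e k ω)) (GS.lap n w))) μ := hf1.sub hf2
    rw [integral_add hf12 (integrable_const _), integral_sub hf1 hf2,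
      integral_const, integral_const_mul, integral_const_mul, integral_const_mul]
    rw [hsumSq]
    rw [integral_finset_sum _ (fun k _ =>
      hinteg1 k (fun p => GS.mdot (GS.edgeMat n p) (GS.lap n w)))]
    rw [Finset.sum_congr rfl (fun k _ => hmdotLap k)]
    simp only [Finset.sum_const, Finset.card_univ, Fintype.card_fin, nsmul_eq_mul,
      probReal_univ, one_smul]
    rw [GSAux.trace_lap_sq]
    field_simp
    ring
  · -- Part 6
    have hpt : (fun ω => (GS.sparseLap n N (fun k => e k ω)
          * GS.sparseLap n N (fun k => e k ω)).trace)
        = fun ω => (N:ℝ)⁻¹ * ((N:ℝ)⁻¹ * ∑ k : Fin N, ∑ l : Fin N,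
            (GS.dot (GS.edgeVec n (e k ω)) (GS.edgeVec n (e l ω))) ^ 2) := by
      funext ω
      rw [GSAux.sparse_trace, mul_assoc]
    rw [hpt]
    rw [integral_const_mul, integral_const_mul, hsumSq]
    field_simp
    ring
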